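/- After the decomposition algorithm with parameter d > 1 completes, every refined segment [b, e] in RS[c] overlaps at most d refined segments of RS[c'], where c' = φ_e(c) > 0. -/

import Mathlib

/-!
Between consecutive columns the overlap count of `[b, j]` with the current state grows by at
most one: the old segments all start at or before column `j`, while a newly appended one ends
after `j` (it is present at the column of its right endpoint), so in their consecutive chain only
the first can reach back to `j + 1`. Since the
count never hits `d` before column `e`, it is below `d` at column `e - 1`; the same argument
applied between columns `e - 1` and `m` then bounds the final count by `d`.
-/

/-- `Partitions L x y`: the list `L` of (nonempty, sorted, consecutive) integer
intervals partitions `[x, y]`. -/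
def Partitions : List (ℕ × ℕ) → ℕ → ℕ → Prop
  | [], x, y => y + 1 = x
  | (b, e) :: t, x, y => b = x ∧ b ≤ e ∧ Partitions t (e + 1) y

/-- Number of intervals in `L` overlapping (nonempty intersection with) `[b, e]`. -/
def overlapCnt (b e : ℕ) (L : List (ℕ × ℕ)) : ℕ :=
  (L.filter (fun p => decide (p.1 ≤ e ∧ b ≤ p.2))).length

lemma overlapCnt_append (b e : ℕ) (L₁ L₂ : List (ℕ × ℕ)) :
    overlapCnt b e (L₁ ++ L₂) = overlapCnt b e L₁ + overlapCnt b e L₂ := by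
  simp [overlapCnt, List.filter_append]

lemma overlapCnt_cons_le (b e : ℕ) (q : ℕ × ℕ) (L : List (ℕ × ℕ)) :
    overlapCnt b e (q :: L) ≤ overlapCnt b e L + 1 := by
  unfold overlapCnt
  rw [List.filter_cons]
  split <;> simp

lemma overlapCnt_eq_zero {b e : ℕ} {L : List (ℕ × ℕ)} (h : ∀ p ∈ L, e < p.1 ∨ p.2 < b) :
    overlapCnt b e L = 0 := by
  simp only [overlapCnt, List.length_eq_zero_iff, List.filter_eq_nil_iff, decide_eq_true_eq]
  intro p hp
  have := h p hp
  omega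

lemma overlapCnt_congr_right {b j j' : ℕ} {L : List (ℕ × ℕ)} (h : ∀ p ∈ L, p.1 ≤ j)
    (hj : j ≤ j') : overlapCnt b j' L = overlapCnt b j L := by
  unfold overlapCnt
  congr 1
  refine List.filter_congr fun p hp => ?_
  have := h p hp
  simp only [decide_eq_decide]
  omega

namespace Partitions

lemma le_succ {L : List (ℕ × ℕ)} {x y : ℕ} (h : Partitions L x y) : x ≤ y + 1 := by
  induction L generalizing x with
  | nil => simp only [Partitions] at h; omega
  | cons q t ih =>
    obtain ⟨rfl, hq, ht⟩ := h
    have := ih ht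
    omega

lemma bounds {L : List (ℕ × ℕ)} {x y : ℕ} (h : Partitions L x y) :
    ∀ p ∈ L, x ≤ p.1 ∧ p.1 ≤ p.2 ∧ p.2 ≤ y := by
  induction L generalizing x with
  | nil => simp
  | cons q t ih =>
    obtain ⟨rfl, hq, ht⟩ := h
    intro p hp
    rcases List.mem_cons.mp hp with rfl | hp
    · have := ht.le_succ
      omega
    · have := ih ht p hp
      omega

lemma of_append {L₁ L₂ : List (ℕ × ℕ)} {x z y : ℕ} (h₁ : Partitions L₁ x z)
    (h : Partitions (L₁ ++ L₂) x y) : Partitions L₂ (z + 1) y := by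
  induction L₁ generalizing x with
  | nil =>
    have hx : z + 1 = x := h₁
    exact hx ▸ h
  | cons q t ih => exact ih h₁.2.2 h.2.2

/-- Only the first segment of a partition can reach back to a point at or before its end. -/
lemma overlapCnt_le_one {S : List (ℕ × ℕ)} {x y b e : ℕ} (h : Partitions S x y)
    (hend : ∀ p ∈ S, e ≤ p.2) : overlapCnt b e S ≤ 1 := by
  cases S with
  | nil => simp [overlapCnt]
  | cons q t =>
    obtain ⟨rfl, -, ht⟩ := h
    have hq := hend q List.mem_cons_self
    have htail : overlapCnt b e t = 0 :=
      overlapCnt_eq_zero fun p hp => Or.inl (by have := (ht.bounds p hp).1; omega)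
    simpa [htail] using overlapCnt_cons_le b e q t

end Partitions

structure SegmentHistory (A : ℕ → List (ℕ × ℕ)) (y : ℕ → ℕ) : Prop where
  partitions : ∀ t, Partitions (A t) 1 (y t)
  le_self : ∀ t, y t ≤ t
  isPrefix : ∀ t t', t ≤ t' → A t <+: A t'
  mem_at_end : ∀ t, ∀ p ∈ A t, p ∈ A p.2

namespace SegmentHistory

variable {A : ℕ → List (ℕ × ℕ)} {y : ℕ → ℕ}

lemma end_le (H : SegmentHistory A y) {t : ℕ} {p : ℕ × ℕ} (hp : p ∈ A t) :
    p.1 ≤ p.2 ∧ p.2 ≤ t := by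
  have := (H.partitions t).bounds p hp
  have := H.le_self t
  omega

/-- A segment appended after column `t` ends after `t`: otherwise it would already be in `A t`,
whose segments all end before the appended ones start. -/
lemma exists_append (H : SegmentHistory A y) {t t' : ℕ} (h : t ≤ t') :
    ∃ S, A t' = A t ++ S ∧ Partitions S (y t + 1) (y t') ∧ ∀ p ∈ S, t < p.2 := by
  obtain ⟨S, hS⟩ := H.isPrefix t t' h
  have hSpart : Partitions S (y t + 1) (y t') :=
    (H.partitions t).of_append (hS ▸ H.partitions t')
  refine ⟨S, hS.symm, hSpart, fun p hp => ?_⟩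
  by_contra! hpt
  have hpA : p ∈ A t :=
    (H.isPrefix p.2 t hpt).subset (H.mem_at_end t' p (hS ▸ List.mem_append_right _ hp))
  have := (H.partitions t).bounds p hpA
  have := hSpart.bounds p hp
  omega

lemma overlapCnt_eq_zero_of_lt (H : SegmentHistory A y) {b j t : ℕ} (h : t < b) :
    overlapCnt b j (A t) = 0 :=
  overlapCnt_eq_zero fun _ hp => Or.inr ((H.end_le hp).2.trans_lt h)

lemma overlapCnt_succ_le (H : SegmentHistory A y) (b : ℕ) {t t' : ℕ} (h : t ≤ t') :
    overlapCnt b (t + 1) (A t') ≤ overlapCnt b t (A t) + 1 := by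
  obtain ⟨S, hA, hSpart, hSend⟩ := H.exists_append h
  have hold : overlapCnt b (t + 1) (A t) = overlapCnt b t (A t) :=
    overlapCnt_congr_right (fun _ hp => (H.end_le hp).1.trans (H.end_le hp).2) t.le_succ
  have hnew : overlapCnt b (t + 1) S ≤ 1 := hSpart.overlapCnt_le_one hSend
  rw [hA, overlapCnt_append, hold]
  omega

lemma overlapCnt_lt_of_ne (H : SegmentHistory A y) {d b e : ℕ} (hd : 1 < d)
    (htrig : ∀ j, b ≤ j → j < e → overlapCnt b j (A j) ≠ d) :
    ∀ j < e, overlapCnt b j (A j) < d := by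
  intro j
  induction j with
  | zero =>
    intro _
    have := (H.partitions 0).overlapCnt_le_one (b := b) (e := 0) fun _ _ => Nat.zero_le _
    omega
  | succ j ih =>
    intro hj
    have hstep := H.overlapCnt_succ_le b (Nat.le_add_right j 1)
    have hprev := ih (by omega)
    by_cases hbj : b ≤ j + 1
    · have := htrig (j + 1) hbj hj
      omega
    · rw [H.overlapCnt_eq_zero_of_lt (by omega)]
      omega

end SegmentHistory

/-- `A t` is the state of `RS[c']` at column `t`; `htrig` encodes that `[b, e]` is created at
column `e`: no earlier column `j'` saw exactly `d` overlaps with `[b, j']`. -/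
theorem stmt10_general (d b e m : ℕ) (A : ℕ → List (ℕ × ℕ)) (y : ℕ → ℕ)
    (hpart : ∀ t, Partitions (A t) 1 (y t)) (hy : ∀ t, y t ≤ t)
    (hpre : ∀ t t', t ≤ t' → A t <+: A t')
    (happ : ∀ t, ∀ p ∈ A t, p ∈ A p.2)
    (hd : 1 < d) (hem : e ≤ m)
    (htrig : ∀ j', b ≤ j' → j' < e → overlapCnt b j' (A j') ≠ d) :
    overlapCnt b e (A m) ≤ d := by
  have H : SegmentHistory A y := ⟨hpart, hy, hpre, happ⟩
  cases e with
  | zero => exact ((hpart m).overlapCnt_le_one fun _ _ => Nat.zero_le _).trans hd.le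
  | succ k =>
    have hk := H.overlapCnt_lt_of_ne hd htrig k k.lt_succ_self
    have := H.overlapCnt_succ_le b (show k ≤ m by omega)
    omega

/-- Overlap constraint after completion.  `A t` is the state of `RS[c']`
(`c' = φ_e(c)`, constant on `[b, e]`) at column `t`, partitioning a prefix
`[1, y t]` with `y t ≤ t`; earlier states are prefixes of later ones and every
segment is present at the column of its right endpoint.  If the refined segment
`[b, e]` is created at column `e` (so, `[b, ·]` being pending before column `e`,
no earlier exact-`d` overlap occurred: `htrig`), then after the algorithm has
processed all `m` columns, `[b, e]` overlaps at most `d` refined segments of the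
final state `A m` of `RS[c']`. -/
theorem stmt10 (d b e m : ℕ) (A : ℕ → List (ℕ × ℕ)) (y : ℕ → ℕ)
    (hpart : ∀ t, Partitions (A t) 1 (y t)) (hy : ∀ t, y t ≤ t)
    (hpre : ∀ t t', t ≤ t' → A t <+: A t')
    (happ : ∀ t, ∀ p ∈ A t, p ∈ A p.2)
    (hd : 1 < d) (hb1 : 1 ≤ b) (hbe : b ≤ e) (hem : e ≤ m)
    (htrig : ∀ j', b ≤ j' → j' < e → overlapCnt b j' (A j') ≠ d) :
    overlapCnt b e (A m) ≤ d :=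
  stmt10_general d b e m A y hpart hy hpre happ hd hem htrig
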